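/- arXiv:2204.00275 — 3 statements merged into one kernel-verified Lean document; each statement's English description precedes it below -/
import Mathlib

section
/- Let H be a real Hilbert space, let {C_i}_{i=1}^m be a finite family of nonempty, closed and convex subsets of H such that int ∩_{i=1}^m C_i ≠ ∅, let r > 1 and M be positive integers, let f : ℕ → {1,…,m} be surjective, let S_n be the associated unrestricted r-set DR operators, let j_f ∈ ℕ satisfy f({1,…,j_f}) = {1,…,m}, and let Q := S_{j_f}∘⋯∘S_0. Let {T_j}_{j=1}^k be a family of strongly nonexpansive operators on H with a common fixed point, let h : ℕ → {1,…,k} be an M-quasi-periodic surjection, and let P_n := T_{h(n)}∘⋯∘T_{h(0)}. If Q is an element of {T_j}_{j=1}^k, then for every x ∈ H the sequence (P_n x) converges weakly to a point x_* ∈ ∩_{i=1}^m C_i. -/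
/-!
The orbit `u n = P_{n-1} x` is Fejér monotone with respect to the common fixed points of the
`T j`, hence bounded. Condition (S), applied to each `T j` at the times it acts, makes the orbit
asymptotically regular: `u n - u (n + 1) → 0`. By quasi-periodicity every `T j` acts in each window
of `M` steps, so by demiclosedness every weak cluster point is a common fixed point, and Opial's
lemma gives weak convergence to such a point `p`. As `Q` is one of the `T j`, `Q p = p`.
Every DR operator and every reflection in `Q` is nonexpansive and fixes the intersection of the
`C i`, which has an interior point; since a point is determined by its distances to the points of
a ball, each factor of `Q`, and then each reflection, fixes `p`, so `p` lies in every `C i`.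
-/

open Filter Topology RealInnerProductSpace

variable {H : Type*} [NormedAddCommGroup H] [InnerProductSpace ℝ H] [CompleteSpace H]

/-- Weak convergence in a Hilbert space: `x n ⇀ p`. -/
def WeakConvergesTo (x : ℕ → H) (p : H) : Prop :=
  ∀ y : H, Tendsto (fun n => ⟪x n, y⟫) atTop (𝓝 ⟪p, y⟫)

/-- `compSeq n g = g (n-1) ∘ ⋯ ∘ g 0` (the identity when `n = 0`). -/
def compSeq {α : Type*} : ℕ → (ℕ → α → α) → (α → α)
  | 0, _ => id
  | n + 1, g => g n ∘ compSeq n g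

/-- `P` is the metric projection onto `C`. -/
def IsProjOn (C : Set H) (P : H → H) : Prop :=
  ∀ x, P x ∈ C ∧ ∀ y ∈ C, ‖x - P x‖ ≤ ‖x - y‖

/-- Nonexpansive operator. -/
def Nonexpansive (T : H → H) : Prop := ∀ x y, ‖T x - T y‖ ≤ ‖x - y‖

/-- Condition (S). -/
def CondS (T : H → H) : Prop :=
  ∀ x y : ℕ → H, (∃ c, ∀ n, ‖x n - y n‖ ≤ c) →
    Tendsto (fun n => ‖x n - y n‖ - ‖T (x n) - T (y n)‖) atTop (𝓝 0) →
    Tendsto (fun n => x n - y n - (T (x n) - T (y n))) atTop (𝓝 (0 : H))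

/-- Strongly nonexpansive operator. -/
def StronglyNonexpansive (T : H → H) : Prop := Nonexpansive T ∧ CondS T

/-- Firmly nonexpansive operator. -/
def FirmlyNonexpansive (T : H → H) : Prop :=
  ∀ x y, ‖T x - T y‖ ^ 2 ≤ ⟪T x - T y, x - y⟫

/-- Averaged operator. -/
def Averaged (T : H → H) : Prop :=
  ∃ lam ∈ Set.Ioo (0 : ℝ) 1, ∃ U : H → H, Nonexpansive U ∧
    T = fun x => (1 - lam) • x + lam • U x

/-- The unrestricted `r`-set Douglas–Rachford operators `S n` associated with projections
`proj i` onto the sets `C i`, indices chosen by `f`: `S n = 2⁻¹ (Id + R_{C_{f((r-1)n+r-1)}} ∘ ⋯ ∘ R_{C_{f((r-1)n)}})`. -/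
noncomputable def drS (proj : ℕ → H → H) (r : ℕ) (f : ℕ → ℕ) (n : ℕ) : H → H :=
  fun x => (2⁻¹ : ℝ) • (x + compSeq r (fun j y => (2 : ℝ) • proj (f ((r - 1) * n + j)) y - y) x)

lemma IsProjOn.apply_eq_self {E : Type*} [NormedAddCommGroup E] {C : Set E} {P : E → E}
    (hP : IsProjOn C P) {x : E} (hx : x ∈ C) : P x = x := by
  simpa [sub_eq_zero, eq_comm] using (hP x).2 x hx

section Projection

variable {E : Type*} [NormedAddCommGroup E] [InnerProductSpace ℝ E]

namespace IsProjOn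

variable {C : Set E} {P : E → E}

lemma inner_sub_le_zero (hC : Convex ℝ C) (hP : IsProjOn C P) (x : E) {y : E} (hy : y ∈ C) :
    ⟪x - P x, y - P x⟫ ≤ 0 := by
  have : Nonempty C := ⟨⟨P x, (hP x).1⟩⟩
  refine (norm_eq_iInf_iff_real_inner_le_zero hC (hP x).1).mp (le_antisymm ?_ ?_) y hy
  · exact le_ciInf fun w => (hP x).2 w w.2
  · exact ciInf_le ⟨0, Set.forall_mem_range.mpr fun _ => norm_nonneg _⟩ (⟨P x, (hP x).1⟩ : C)

lemma firmlyNonexpansive (hC : Convex ℝ C) (hP : IsProjOn C P) : FirmlyNonexpansive P := by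
  intro x y
  have hx := hP.inner_sub_le_zero hC x (hP y).1
  have hy := hP.inner_sub_le_zero hC y (hP x).1
  have : ⟪P x - P y, x - y⟫ - ‖P x - P y‖ ^ 2 = -⟪x - P x, P y - P x⟫ - ⟪y - P y, P x - P y⟫ := by
    rw [← real_inner_self_eq_norm_sq]
    simp only [inner_sub_left, inner_sub_right, real_inner_comm]
    ring
  linarith

end IsProjOn

def projReflection (P : E → E) : E → E := fun y => (2 : ℝ) • P y - y

lemma FirmlyNonexpansive.nonexpansive_projReflection {P : E → E} (hP : FirmlyNonexpansive P) :
    Nonexpansive (projReflection P) := by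
  intro a b
  have hsq : ‖projReflection P a - projReflection P b‖ ^ 2 = ‖a - b‖ ^ 2
      - 4 * (⟪P a - P b, a - b⟫ - ‖P a - P b‖ ^ 2) := by
    have : projReflection P a - projReflection P b = (2 : ℝ) • (P a - P b) - (a - b) := by
      simp only [projReflection]; module
    rw [this, norm_sub_sq_real, real_inner_smul_left, norm_smul, Real.norm_ofNat]
    ring
  exact pow_le_pow_iff_left₀ (norm_nonneg _) (norm_nonneg _) two_ne_zero |>.mp
    (by linarith [hP a b])

lemma IsProjOn.projReflection_eq_self_iff {C : Set E} {P : E → E} (hP : IsProjOn C P) {y : E} :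
    projReflection P y = y ↔ y ∈ C := by
  rw [projReflection, sub_eq_iff_eq_add, ← two_smul ℝ y, smul_right_inj two_ne_zero]
  exact ⟨fun hy => hy ▸ (hP y).1, hP.apply_eq_self⟩

lemma nonexpansive_half_add {V : E → E} (hV : Nonexpansive V) :
    Nonexpansive fun x => (2⁻¹ : ℝ) • (x + V x) := by
  intro a b
  rw [← smul_sub, norm_smul, add_sub_add_comm]
  calc ‖(2⁻¹ : ℝ)‖ * ‖a - b + (V a - V b)‖ ≤ 2⁻¹ * (‖a - b‖ + ‖a - b‖) := by
        rw [Real.norm_of_nonneg (by norm_num)]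
        gcongr
        exact (norm_add_le _ _).trans (by linarith [hV a b])
    _ = ‖a - b‖ := by ring

lemma half_add_eq_self_iff {x y : E} : (2⁻¹ : ℝ) • (x + y) = x ↔ y = x := by
  rw [inv_smul_eq_iff₀ two_ne_zero, two_smul, add_right_inj]

end Projection

lemma compSeq_apply_eq_self {α : Type*} {g : ℕ → α → α} {w : α} (hw : ∀ t, g t w = w)
    (n : ℕ) : compSeq n g w = w := by
  induction n with
  | zero => rfl
  | succ n ih => exact (congrArg (g n) ih).trans (hw n)

lemma nonexpansive_compSeq {E : Type*} [NormedAddCommGroup E] {g : ℕ → E → E}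
    (hg : ∀ t, Nonexpansive (g t)) (n : ℕ) : Nonexpansive (compSeq n g) := by
  induction n with
  | zero => exact fun a b => le_rfl
  | succ n ih => exact fun a b => (hg n _ _).trans (ih a b)

section Rigidity

variable {E : Type*} [NormedAddCommGroup E] [InnerProductSpace ℝ E]

lemma eq_of_forall_norm_sub_eq {s : Set E} (hs : (interior s).Nonempty) {a b : E}
    (hab : ∀ w ∈ s, ‖a - w‖ = ‖b - w‖) : a = b := by
  -- the points equidistant from `a` and `b` form a hyperplane orthogonal to `a - b`
  have hplane : ∀ w ∈ s, 2 * ⟪a - b, w⟫ = ‖a‖ ^ 2 - ‖b‖ ^ 2 := by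
    intro w hw
    have := congrArg (· ^ 2) (hab w hw)
    simp only [norm_sub_sq_real] at this
    rw [inner_sub_left]
    linarith
  obtain ⟨z, hz⟩ := hs
  have hline : Tendsto (fun t : ℝ => z + t • (a - b)) (𝓝[>] 0) (𝓝 z) := by
    have hcont : Continuous fun t : ℝ => z + t • (a - b) := by fun_prop
    simpa using (hcont.tendsto 0).mono_left nhdsWithin_le_nhds
  obtain ⟨t, hts, ht⟩ :=
    ((hline.eventually (mem_interior_iff_mem_nhds.mp hz)).and self_mem_nhdsWithin).exists
  have h1 := hplane z (interior_subset hz)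
  have h2 := hplane _ hts
  rw [inner_add_right, real_inner_smul_right, real_inner_self_eq_norm_sq] at h2
  have : t * ‖a - b‖ ^ 2 = 0 := by linarith
  simpa [sub_eq_zero, ht.ne'] using this

lemma apply_eq_self_of_compSeq_eq_self {s : Set E} (hs : (interior s).Nonempty)
    {g : ℕ → E → E} (hg : ∀ t, Nonexpansive (g t)) (hfix : ∀ t, ∀ w ∈ s, g t w = w)
    {n : ℕ} {y : E} (hy : compSeq n g y = y) {t : ℕ} (ht : t < n) : g t y = y := by
  have hanti : ∀ w ∈ s, Antitone fun t => ‖compSeq t g y - w‖ := fun w hw =>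
    antitone_nat_of_succ_le fun t => by
      have := hg t (compSeq t g y) w
      rwa [hfix t w hw] at this
  -- distances to points of `s` decrease along the partial compositions and return to their start
  have hpartial : ∀ t ≤ n, compSeq t g y = y := fun t ht =>
    eq_of_forall_norm_sub_eq hs fun w hw =>
      le_antisymm (hanti w hw (Nat.zero_le t)) (by simpa only [hy] using hanti w hw ht)
  calc g t y = g t (compSeq t g y) := by rw [hpartial t ht.le]
    _ = y := hpartial (t + 1) ht

end Rigidity

theorem mem_iInter_of_compSeq_drS_eq_self {E : Type*} [NormedAddCommGroup E]
    [InnerProductSpace ℝ E] {m r jf : ℕ} (hr : 1 < r) {C : ℕ → Set E}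
    (hconv : ∀ i ∈ Set.Icc 1 m, Convex ℝ (C i))
    (hint : (interior (⋂ i ∈ Set.Icc 1 m, C i)).Nonempty)
    {proj : ℕ → E → E} (hproj : ∀ i ∈ Set.Icc 1 m, IsProjOn (C i) (proj i))
    {f : ℕ → ℕ} (hf : ∀ t, f t ∈ Set.Icc 1 m) (hjf : Set.Icc 1 m ⊆ f '' Set.Icc 1 jf)
    {y : E} (hy : compSeq (jf + 1) (drS proj r f) y = y) : y ∈ ⋂ i ∈ Set.Icc 1 m, C i := by
  set R : ℕ → ℕ → E → E := fun n j => projReflection (proj (f ((r - 1) * n + j)))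
  have hR : ∀ n j, Nonexpansive (R n j) := fun n j =>
    ((hproj _ (hf _)).firmlyNonexpansive (hconv _ (hf _))).nonexpansive_projReflection
  have hRfix : ∀ n j, ∀ w ∈ ⋂ i ∈ Set.Icc 1 m, C i, R n j w = w := fun n j w hw =>
    (hproj _ (hf _)).projReflection_eq_self_iff.mpr (Set.mem_iInter₂.mp hw _ (hf _))
  have hS : ∀ n, drS proj r f n = fun x => (2⁻¹ : ℝ) • (x + compSeq r (R n) x) := fun n => rfl
  have hmem : ∀ n ≤ jf, ∀ j < r, y ∈ C (f ((r - 1) * n + j)) := by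
    intro n hn j hj
    have hSy : drS proj r f n y = y :=
      apply_eq_self_of_compSeq_eq_self hint
        (fun n => hS n ▸ nonexpansive_half_add (nonexpansive_compSeq (hR n) r))
        (fun n w hw => by rw [hS, half_add_eq_self_iff, compSeq_apply_eq_self (hRfix n · w hw)])
        hy (Nat.lt_succ_of_le hn)
    rw [hS, half_add_eq_self_iff] at hSy
    exact (hproj _ (hf _)).projReflection_eq_self_iff.mp
      (apply_eq_self_of_compSeq_eq_self hint (hR n) (hRfix n) hSy hj)
  refine Set.mem_iInter₂.mpr fun i hi => ?_
  obtain ⟨t, ht, rfl⟩ := hjf hi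
  rw [← Nat.div_add_mod t (r - 1)]
  exact hmem _ ((Nat.div_le_self t _).trans ht.2) _
    ((Nat.mod_lt t (by omega)).trans_le (Nat.sub_le r 1))

section WeakConvergence

variable {E : Type*} [NormedAddCommGroup E] [InnerProductSpace ℝ E]

lemma WeakConvergesTo.of_tendsto_sub {v w : ℕ → E} {p : E} (hv : WeakConvergesTo v p)
    (hwv : Tendsto (fun n => w n - v n) atTop (𝓝 0)) : WeakConvergesTo w p := by
  intro y
  have := (hv y).add (hwv.inner (tendsto_const_nhds (x := y)))
  simpa [inner_sub_left] using this

/-- Demiclosedness of `Id - S` at `0`. -/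
lemma Nonexpansive.apply_eq_of_weakConvergesTo {S : E → E} (hS : Nonexpansive S) {v : ℕ → E}
    {p : E} {c : ℝ} (hb : ∀ l, ‖v l‖ ≤ c) (hv : WeakConvergesTo v p)
    (hreg : Tendsto (fun l => v l - S (v l)) atTop (𝓝 0)) : S p = p := by
  set e : ℕ → ℝ := fun l => ‖v l - S (v l)‖
  have he : Tendsto e atTop (𝓝 0) := tendsto_zero_iff_norm_tendsto_zero.mp hreg
  -- expand `‖v - S p‖²` around `p` and compare with `‖v - S p‖ ≤ e + ‖v - p‖`
  have hbound : ∀ l, ‖p - S p‖ ^ 2 ≤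
      e l ^ 2 + 2 * e l * (c + ‖p‖) - 2 * (⟪v l, p - S p⟫ - ⟪p, p - S p⟫) := by
    intro l
    have hexp : ‖v l - S p‖ ^ 2 = ‖v l - p‖ ^ 2 + 2 * ⟪v l - p, p - S p⟫ + ‖p - S p‖ ^ 2 := by
      rw [← norm_add_sq_real, sub_add_sub_cancel]
    have htri : ‖v l - S p‖ ≤ e l + ‖v l - p‖ :=
      (norm_sub_le_norm_sub_add_norm_sub _ (S (v l)) _).trans (add_le_add le_rfl (hS _ _))
    have hvp : ‖v l - p‖ ≤ c + ‖p‖ := (norm_sub_le _ _).trans (by linarith [hb l])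
    have he0 : 0 ≤ e l := norm_nonneg _
    rw [inner_sub_left] at hexp
    nlinarith [pow_le_pow_left₀ (norm_nonneg _) htri 2, norm_nonneg (v l - p)]
  have hlim : Tendsto (fun l =>
      e l ^ 2 + 2 * e l * (c + ‖p‖) - 2 * (⟪v l, p - S p⟫ - ⟪p, p - S p⟫)) atTop (𝓝 0) := by
    have := ((he.pow 2).add ((he.const_mul 2).mul_const (c + ‖p‖))).sub
      (((hv (p - S p)).sub_const ⟪p, p - S p⟫).const_mul 2)
    simpa using this
  have : ‖p - S p‖ ^ 2 ≤ 0 := ge_of_tendsto hlim (Eventually.of_forall hbound)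
  exact (sub_eq_zero.mp (norm_eq_zero.mp (by nlinarith [norm_nonneg (p - S p)]))).symm

lemma eq_of_weakConvergesTo_of_tendsto_norm_sub {u : ℕ → E} {p q : E} {Lp Lq : ℝ}
    (hp : Tendsto (fun n => ‖u n - p‖) atTop (𝓝 Lp))
    (hq : Tendsto (fun n => ‖u n - q‖) atTop (𝓝 Lq))
    {α β : ℕ → ℕ} (hα : Tendsto α atTop atTop) (hβ : Tendsto β atTop atTop)
    (hup : WeakConvergesTo (fun l => u (α l)) p) (huq : WeakConvergesTo (fun l => u (β l)) q) :
    p = q := by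
  -- `⟪u n, p - q⟫` is an affine function of `‖u n - p‖² - ‖u n - q‖²`, hence converges
  have hexp : ∀ n, ⟪u n, p - q⟫ = (‖p‖ ^ 2 - ‖q‖ ^ 2 - (‖u n - p‖ ^ 2 - ‖u n - q‖ ^ 2)) / 2 := by
    intro n
    rw [norm_sub_sq_real, norm_sub_sq_real, inner_sub_right]
    ring
  have hlim : Tendsto (fun n => ⟪u n, p - q⟫) atTop
      (𝓝 ((‖p‖ ^ 2 - ‖q‖ ^ 2 - (Lp ^ 2 - Lq ^ 2)) / 2)) := by
    simp only [hexp]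
    exact (tendsto_const_nhds.sub ((hp.pow 2).sub (hq.pow 2))).div_const 2
  have hpq := tendsto_nhds_unique (hup (p - q)) (hlim.comp hα)
  have hqq := tendsto_nhds_unique (huq (p - q)) (hlim.comp hβ)
  have : ⟪p - q, p - q⟫ = 0 := by rw [inner_sub_left, hpq, hqq, sub_self]
  exact sub_eq_zero.mp (inner_self_eq_zero.mp this)

/-- Opial's lemma. -/
theorem exists_weakConvergesTo_of_antitone_norm_sub {u : ℕ → E} {F : Set E}
    (hfejer : ∀ w ∈ F, Antitone fun n => ‖u n - w‖)
    (hcluster : ∀ ψ : ℕ → ℕ, Tendsto ψ atTop atTop → ∃ φ : ℕ → ℕ, Tendsto φ atTop atTop ∧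
      ∃ q ∈ F, WeakConvergesTo (fun l => u (ψ (φ l))) q) :
    ∃ p ∈ F, WeakConvergesTo u p := by
  have hlim : ∀ w ∈ F, Tendsto (fun n => ‖u n - w‖) atTop (𝓝 (⨅ n, ‖u n - w‖)) := fun w hw =>
    tendsto_atTop_ciInf (hfejer w hw) ⟨0, Set.forall_mem_range.mpr fun _ => norm_nonneg _⟩
  obtain ⟨φ₀, hφ₀, p, hpF, hp⟩ := hcluster id tendsto_id
  refine ⟨p, hpF, fun y => tendsto_of_subseq_tendsto fun ψ hψ => ?_⟩
  obtain ⟨φ, hφ, q, hqF, hq⟩ := hcluster ψ hψ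
  obtain rfl : q = p :=
    eq_of_weakConvergesTo_of_tendsto_norm_sub (hlim q hqF) (hlim p hpF) (hψ.comp hφ) hφ₀ hq hp
  exact ⟨φ, hq y⟩

variable [CompleteSpace E]

/-- Via sequential Banach–Alaoglu on the separable closed span of the sequence. -/
lemma exists_strictMono_weakConvergesTo {u : ℕ → E} {c : ℝ} (hb : ∀ n, ‖u n‖ ≤ c) :
    ∃ φ : ℕ → ℕ, StrictMono φ ∧ ∃ p, WeakConvergesTo (fun l => u (φ l)) p := by
  set K := (Submodule.span ℝ (Set.range u)).topologicalClosure
  have huK (n : ℕ) : u n ∈ K :=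
    Submodule.le_topologicalClosure _ (Submodule.subset_span (Set.mem_range_self n))
  have : CompleteSpace K := (Submodule.isClosed_topologicalClosure _).completeSpace_coe
  have : TopologicalSpace.SeparableSpace K :=
    (Set.countable_range u).isSeparable.span.closure.separableSpace
  set v : ℕ → WeakDual ℝ K := fun n =>
    StrongDual.toWeakDual (InnerProductSpace.toDual ℝ K ⟨u n, huK n⟩)
  have hv (n : ℕ) : v n ∈ WeakDual.toStrongDual ⁻¹' Metric.closedBall 0 c :=
    (mem_closedBall_zero_iff (E := StrongDual ℝ K)).mpr
      (((InnerProductSpace.toDual ℝ K).norm_map _).trans_le (hb n))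
  obtain ⟨ℓ, -, φ, hφ, hℓ⟩ := WeakDual.isSeqCompact_closedBall ℝ K 0 c hv
  set p : K := (InnerProductSpace.toDual ℝ K).symm (WeakDual.toStrongDual ℓ)
  refine ⟨φ, hφ, p, fun y => ?_⟩
  have key := ((WeakDual.eval_continuous (K.orthogonalProjectionOnto y)).tendsto ℓ).comp hℓ
  have hlim : ℓ (K.orthogonalProjectionOnto y) = ⟪(p : E), y⟫ := by
    rw [← Submodule.inner_orthogonalProjectionOnto_eq_of_mem_left,
      InnerProductSpace.toDual_symm_apply]
    rfl
  simpa [v, Function.comp_def, hlim] using key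

end WeakConvergence

section UnrestrictedProduct

variable {E : Type*} [NormedAddCommGroup E]

/-- Condition (S) applied to the sequence that follows `u` at the times where `p` holds and rests
at the fixed point `z` otherwise. -/
lemma CondS.tendsto_ite_sub_succ {S : E → E} (hS : CondS S) {z : E} (hz : S z = z)
    {u : ℕ → E} {c : ℝ} (hb : ∀ n, ‖u n - z‖ ≤ c)
    (hdec : Tendsto (fun n => ‖u n - z‖ - ‖u (n + 1) - z‖) atTop (𝓝 0))
    (p : ℕ → Prop) [DecidablePred p] (hu : ∀ n, p n → u (n + 1) = S (u n)) :
    Tendsto (fun n => if p n then u n - u (n + 1) else 0) atTop (𝓝 0) := by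
  set x : ℕ → E := fun n => if p n then u n else z
  have hstep : ∀ n, x n - z - (S (x n) - S z) = if p n then u n - u (n + 1) else 0 := by
    intro n
    by_cases hn : p n
    · simp [x, hn, hu n hn, hz]
    · simp [x, hn, hz]
  have hgap : ∀ n, ‖x n - z‖ - ‖S (x n) - S z‖ =
      if p n then ‖u n - z‖ - ‖u (n + 1) - z‖ else 0 := by
    intro n
    by_cases hn : p n
    · simp [x, hn, hu n hn, hz]
    · simp [x, hn, hz]
  have hbound : ∀ n, ‖x n - z‖ ≤ c := by
    intro n
    by_cases hn : p n
    · simpa [x, hn] using hb n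
    · simpa [x, hn] using (norm_nonneg _).trans (hb 0)
  have hgap_lim : Tendsto (fun n => ‖x n - z‖ - ‖S (x n) - S z‖) atTop (𝓝 0) := by
    refine squeeze_zero_norm (fun n => ?_) (by simpa using hdec.norm)
    rw [hgap]
    split_ifs <;> simp
  simpa only [hstep] using hS x (fun _ => z) ⟨c, hbound⟩ hgap_lim

lemma tendsto_sub_add_of_tendsto_sub_succ {u : ℕ → E}
    (hu : Tendsto (fun n => u n - u (n + 1)) atTop (𝓝 0)) (t : ℕ) :
    Tendsto (fun n => u n - u (n + t)) atTop (𝓝 0) := by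
  induction t with
  | zero => simp
  | succ t ih => simpa [← add_assoc] using ih.add (hu.comp (tendsto_add_atTop_nat t))

variable {T : ℕ → E → E} {h : ℕ → ℕ} {u : ℕ → E}

lemma antitone_norm_sub_of_succ (hT : ∀ n, Nonexpansive (T (h n)))
    (hu : ∀ n, u (n + 1) = T (h n) (u n)) {w : E} (hw : ∀ n, T (h n) w = w) :
    Antitone fun n => ‖u n - w‖ :=
  antitone_nat_of_succ_le fun n =>
    calc ‖u (n + 1) - w‖ = ‖T (h n) (u n) - T (h n) w‖ := by rw [hu, hw]
      _ ≤ ‖u n - w‖ := hT n _ _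

theorem tendsto_sub_succ_of_stronglyNonexpansive (s : Finset ℕ) (hh : ∀ n, h n ∈ s)
    (hT : ∀ j ∈ s, StronglyNonexpansive (T j)) {z : E} (hz : ∀ j ∈ s, T j z = z)
    (hu : ∀ n, u (n + 1) = T (h n) (u n)) : Tendsto (fun n => u n - u (n + 1)) atTop (𝓝 0) := by
  have hanti := antitone_norm_sub_of_succ (fun n => (hT _ (hh n)).1) hu fun n => hz _ (hh n)
  have hdec : Tendsto (fun n => ‖u n - z‖ - ‖u (n + 1) - z‖) atTop (𝓝 0) := by
    have hL := tendsto_atTop_ciInf hanti ⟨0, Set.forall_mem_range.mpr fun _ => norm_nonneg _⟩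
    simpa using hL.sub (hL.comp (tendsto_add_atTop_nat 1))
  have hsum := tendsto_finsetSum s fun j hj =>
    (hT j hj).2.tendsto_ite_sub_succ (hz j hj) (fun n => hanti (Nat.zero_le n)) hdec (h · = j)
      fun n hn => hn ▸ hu n
  simpa [Finset.sum_ite_eq, hh] using hsum

theorem exists_fixed_weak_cluster_of_quasiPeriodic [InnerProductSpace ℝ E] [CompleteSpace E]
    {M : ℕ} (hqp : ∀ n, h '' Set.Ico n (n + M) = Set.range h)
    (hT : ∀ n, Nonexpansive (T (h n))) (hu : ∀ n, u (n + 1) = T (h n) (u n))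
    {c : ℝ} (hb : ∀ n, ‖u n‖ ≤ c) (hreg : Tendsto (fun n => u n - u (n + 1)) atTop (𝓝 0))
    {ψ : ℕ → ℕ} (hψ : Tendsto ψ atTop atTop) :
    ∃ φ : ℕ → ℕ, Tendsto φ atTop atTop ∧
      ∃ q ∈ {w | ∀ n, T (h n) w = w}, WeakConvergesTo (fun l => u (ψ (φ l))) q := by
  obtain ⟨φ, hφ, q, hq⟩ := exists_strictMono_weakConvergesTo fun l => hb (ψ l)
  refine ⟨φ, hφ.tendsto_atTop, q, fun n => ?_, hq⟩
  set a : ℕ → ℕ := fun l => ψ (φ l)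
  have ha : Tendsto a atTop atTop := hψ.comp hφ.tendsto_atTop
  have hwindow : ∀ l, ∃ s ∈ Set.Ico (a l) (a l + M), h s = h n := fun l => by
    rw [← Set.mem_image, hqp]
    exact Set.mem_range_self n
  choose s hs hsn using hwindow
  have hclose : Tendsto (fun l => u (s l) - u (a l)) atTop (𝓝 0) := by
    have hsum : Tendsto (fun m => ∑ t ∈ Finset.range M, ‖u m - u (m + t)‖) atTop (𝓝 0) := by
      simpa using tendsto_finsetSum _ fun t _ => (tendsto_sub_add_of_tendsto_sub_succ hreg t).norm
    refine squeeze_zero_norm (fun l => ?_) (hsum.comp ha)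
    obtain ⟨t, ht, hst⟩ : ∃ t < M, s l = a l + t := ⟨s l - a l, by grind, by grind⟩
    rw [hst, norm_sub_rev]
    exact Finset.single_le_sum (f := fun t => ‖u (a l) - u (a l + t)‖)
      (fun t _ => norm_nonneg _) (Finset.mem_range.mpr ht)
  have hs_tendsto : Tendsto s atTop atTop := tendsto_atTop_mono (fun l => (hs l).1) ha
  refine (hT n).apply_eq_of_weakConvergesTo (fun l => hb (s l)) (hq.of_tendsto_sub hclose) ?_
  simpa [Function.comp_def, hu, hsn] using hreg.comp hs_tendsto

end UnrestrictedProduct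

theorem stmt5_general
    (m r M k : ℕ) (hr : 1 < r)
    (C : ℕ → Set H)
    (hC : ∀ i ∈ Set.Icc 1 m, (C i).Nonempty ∧ IsClosed (C i) ∧ Convex ℝ (C i))
    (hint : (interior (⋂ i ∈ Set.Icc 1 m, C i)).Nonempty)
    (proj : ℕ → H → H) (hproj : ∀ i ∈ Set.Icc 1 m, IsProjOn (C i) (proj i))
    (f : ℕ → ℕ) (hf : Set.range f = Set.Icc 1 m)
    (jf : ℕ) (hjf : f '' Set.Icc 1 jf = Set.Icc 1 m)
    (T : ℕ → H → H) (hT : ∀ j ∈ Set.Icc 1 k, StronglyNonexpansive (T j))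
    (hcommon : ∃ z : H, ∀ j ∈ Set.Icc 1 k, T j z = z)
    (h : ℕ → ℕ) (hh : Set.range h = Set.Icc 1 k)
    (hqp : ∀ n : ℕ, h '' Set.Ico n (n + M) = Set.range h)
    (hQ : ∃ j ∈ Set.Icc 1 k, compSeq (jf + 1) (drS proj r f) = T j)
    (x : H) :
    ∃ p ∈ ⋂ i ∈ Set.Icc 1 m, C i,
      WeakConvergesTo (fun n => compSeq (n + 1) (fun i => T (h i)) x) p := by
  obtain ⟨z, hz⟩ := hcommon
  have hhk : ∀ n, h n ∈ Set.Icc 1 k := fun n => hh ▸ Set.mem_range_self n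
  set u : ℕ → H := fun n => compSeq n (fun i => T (h i)) x
  have hu : ∀ n, u (n + 1) = T (h n) (u n) := fun n => rfl
  have hTh : ∀ n, Nonexpansive (T (h n)) := fun n => (hT _ (hhk n)).1
  have hfejer : ∀ w ∈ {w | ∀ n, T (h n) w = w}, Antitone fun n => ‖u n - w‖ :=
    fun w hw => antitone_norm_sub_of_succ hTh hu hw
  have hzfix : ∀ n, T (h n) z = z := fun n => hz _ (hhk n)
  have hb : ∀ n, ‖u n‖ ≤ ‖z‖ + ‖u 0 - z‖ := fun n =>
    (norm_le_norm_add_norm_sub' _ z).trans (add_le_add le_rfl (hfejer z hzfix (Nat.zero_le n)))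
  have hreg := tendsto_sub_succ_of_stronglyNonexpansive (Finset.Icc 1 k)
    (fun n => Finset.mem_Icc.mpr (hhk n)) (fun j hj => hT j (Finset.mem_Icc.mp hj))
    (fun j hj => hz j (Finset.mem_Icc.mp hj)) hu
  obtain ⟨p, hpfix, hp⟩ := exists_weakConvergesTo_of_antitone_norm_sub hfejer
    fun ψ hψ => exists_fixed_weak_cluster_of_quasiPeriodic hqp hTh hu hb hreg hψ
  obtain ⟨j, hj, hQj⟩ := hQ
  have hQp : compSeq (jf + 1) (drS proj r f) p = p := by
    obtain ⟨n, rfl⟩ := hh.ge hj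
    rw [hQj]
    exact hpfix n
  refine ⟨p, mem_iInter_of_compSeq_drS_eq_self hr (fun i hi => (hC i hi).2.2) hint hproj
    (fun t => hf ▸ Set.mem_range_self t) hjf.ge hQp, fun y => (hp y).comp (tendsto_add_atTop_nat 1)⟩

/-- Theorem 3.3(ii): unrestricted products of strongly nonexpansive operators
containing the composite unrestricted DR operator `Q`. -/
theorem stmt5
    (m r M k : ℕ) (hr : 1 < r) (hM : 0 < M)
    (C : ℕ → Set H)
    (hC : ∀ i ∈ Set.Icc 1 m, (C i).Nonempty ∧ IsClosed (C i) ∧ Convex ℝ (C i))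
    (hint : (interior (⋂ i ∈ Set.Icc 1 m, C i)).Nonempty)
    (proj : ℕ → H → H) (hproj : ∀ i ∈ Set.Icc 1 m, IsProjOn (C i) (proj i))
    (f : ℕ → ℕ) (hf : Set.range f = Set.Icc 1 m)
    (jf : ℕ) (hjf : f '' Set.Icc 1 jf = Set.Icc 1 m)
    (T : ℕ → H → H) (hT : ∀ j ∈ Set.Icc 1 k, StronglyNonexpansive (T j))
    (hcommon : ∃ z : H, ∀ j ∈ Set.Icc 1 k, T j z = z)
    (h : ℕ → ℕ) (hh : Set.range h = Set.Icc 1 k)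
    (hqp : ∀ n : ℕ, h '' Set.Ico n (n + M) = Set.range h)
    (hQ : ∃ j ∈ Set.Icc 1 k, compSeq (jf + 1) (drS proj r f) = T j)
    (x : H) :
    ∃ p ∈ ⋂ i ∈ Set.Icc 1 m, C i,
      WeakConvergesTo (fun n => compSeq (n + 1) (fun i => T (h i)) x) p :=
  stmt5_general m r M k hr C hC hint proj hproj f hf jf hjf T hT hcommon h hh hqp hQ x
end

section
/- Let H be a real Hilbert space and let {T_i}_{i=1}^m be a finite family of strongly nonexpansive operators on H with ∩_{i=1}^m Fix(T_i) ≠ ∅. Let M be a positive integer and let h : ℕ → {1,…,m} be an M-quasi-periodic surjection. Then for every x ∈ H, the sequence (P_n x), where P_n := T_{h(n)}∘⋯∘T_{h(0)} is the unrestricted product of {T_i}_{i=1}^m determined by h, converges weakly to a common fixed point of the operators {T_i}_{i=1}^m. -/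
open Filter Topology RealInnerProductSpace

variable {H : Type*} [NormedAddCommGroup H] [InnerProductSpace ℝ H] [CompleteSpace H]

/-!
The iterates `y n` are Fejér monotone with respect to the common fixed point set `F`, so
`‖y n - z‖` converges for every `z ∈ F` and any two weak cluster points in `F` coincide (Opial).
Following `y` only at the steps where `T i` acts and freezing it at a common fixed point
otherwise, Condition (S) gives asymptotic regularity `y n - y (n + 1) → 0`. By quasi-periodicity
every `T i` acts within each window of `M` steps, so near any weakly convergent subsequence there
are indices where `T i` moves `y` by a vanishing amount; the demiclosedness principle then puts
every weak cluster point in `F`.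
-/

theorem Antitone.exists_tendsto_of_nonneg {u : ℕ → ℝ} (hu : Antitone u) (h0 : ∀ n, 0 ≤ u n) :
    ∃ a, Tendsto u atTop (𝓝 a) :=
  ⟨_, tendsto_atTop_ciInf hu ⟨0, Set.forall_mem_range.2 h0⟩⟩

theorem tendsto_sub_of_tendsto_sub_succ {E : Type*} [SeminormedAddCommGroup E] {x : ℕ → E}
    (hreg : Tendsto (fun n => x n - x (n + 1)) atTop (𝓝 0)) {M : ℕ} {φ j : ℕ → ℕ}
    (hφ : Tendsto φ atTop atTop) (hj : ∀ k, j k ∈ Set.Ico (φ k) (φ k + M)) :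
    Tendsto (fun k => x (j k) - x (φ k)) atTop (𝓝 0) := by
  have hwindow : Tendsto (fun k => ∑ t ∈ Finset.range M, ‖x (φ k + t) - x (φ k + t + 1)‖)
      atTop (𝓝 0) := by
    rw [← Finset.sum_const_zero (s := Finset.range M)]
    exact tendsto_finsetSum _ fun t _ =>
      norm_zero (E := E) ▸ hreg.norm.comp ((tendsto_add_atTop_nat t).comp hφ)
  refine squeeze_zero_norm (fun k => ?_) hwindow
  obtain ⟨hlo, hhi⟩ := hj k
  calc ‖x (j k) - x (φ k)‖ = dist (x (φ k + 0)) (x (φ k + (j k - φ k))) := by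
        rw [dist_comm, dist_eq_norm, add_zero, Nat.add_sub_cancel' hlo]
    _ ≤ ∑ t ∈ Finset.range (j k - φ k), dist (x (φ k + t)) (x (φ k + (t + 1))) :=
        dist_le_range_sum_dist (fun t => x (φ k + t)) _
    _ ≤ ∑ t ∈ Finset.range M, ‖x (φ k + t) - x (φ k + t + 1)‖ := by
        simp only [dist_eq_norm, ← add_assoc]
        exact Finset.sum_le_sum_of_subset_of_nonneg (Finset.range_subset_range.2 (by omega))
          fun _ _ _ => norm_nonneg _

section NormedAddCommGroup

variable {E : Type*} [NormedAddCommGroup E]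

def FejerMonotone (x : ℕ → E) (F : Set E) : Prop :=
  ∀ z ∈ F, Antitone fun n => ‖x n - z‖

theorem antitone_norm_sub_of_nonexpansive {S : ℕ → E → E} {x : ℕ → E} {z : E}
    (hS : ∀ n, Nonexpansive (S n)) (hz : ∀ n, S n z = z) (hx : ∀ n, x (n + 1) = S n (x n)) :
    Antitone fun n => ‖x n - z‖ :=
  antitone_nat_of_succ_le fun n => by
    simpa only [hx, hz] using (hS n) (x n) z

theorem StronglyNonexpansive.tendsto_sub_apply {T : E → E} (hT : StronglyNonexpansive T)
    {z : E} (hz : T z = z) {y : ℕ → E} {c : ℝ} (hbound : ∀ n, ‖y n - z‖ ≤ c)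
    (hdec : Tendsto (fun n => ‖y n - z‖ - ‖T (y n) - z‖) atTop (𝓝 0)) :
    Tendsto (fun n => y n - T (y n)) atTop (𝓝 0) := by
  simpa [hz] using hT.2 y (fun _ => z) ⟨c, hbound⟩ (by simpa [hz] using hdec)

theorem StronglyNonexpansive.tendsto_indicator_sub_succ {T : E → E}
    (hT : StronglyNonexpansive T) {z : E} (hz : T z = z) {x : ℕ → E}
    (hanti : Antitone fun n => ‖x n - z‖) {A : Set ℕ} (hx : ∀ n ∈ A, x (n + 1) = T (x n)) :
    Tendsto (fun n => A.indicator (fun n => x n - x (n + 1)) n) atTop (𝓝 0) := by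
  classical
  obtain ⟨a, ha⟩ := hanti.exists_tendsto_of_nonneg fun n => norm_nonneg _
  have hdec : Tendsto (fun n => ‖x n - z‖ - ‖x (n + 1) - z‖) atTop (𝓝 0) := by
    simpa using ha.sub (ha.comp (tendsto_add_atTop_nat 1))
  -- Condition (S) along the orbit stopped at `z` outside `A`.
  set y := fun n => if n ∈ A then x n else z
  have hy : ∀ n, y n - T (y n) = A.indicator (fun n => x n - x (n + 1)) n := fun n => by
    by_cases hn : n ∈ A
    · simp [y, hn, hx n hn]
    · simp [y, hn, hz]
  refine (tendsto_congr hy).1 (hT.tendsto_sub_apply hz (c := ‖x 0 - z‖) (fun n => ?_) ?_)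
  · by_cases hn : n ∈ A
    · simpa [y, hn] using hanti (Nat.zero_le n)
    · simp [y, hn]
  · refine squeeze_zero (fun n => ?_) (fun n => ?_) hdec
    · simpa [hz] using hT.1 (y n) z
    · by_cases hn : n ∈ A
      · simp [y, hn, hx n hn]
      · simpa [y, hn, hz] using hanti (Nat.le_succ n)

theorem tendsto_sub_succ_of_stronglyNonexpansive_s6 {ι : Type*} {T : ι → E → E} {I : Set ι}
    (hI : I.Finite) (hT : ∀ i ∈ I, StronglyNonexpansive (T i)) {z : E} (hz : ∀ i ∈ I, T i z = z)
    {g : ℕ → ι} (hg : ∀ n, g n ∈ I) {x : ℕ → E} (hx : ∀ n, x (n + 1) = T (g n) (x n)) :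
    Tendsto (fun n => x n - x (n + 1)) atTop (𝓝 0) := by
  have hanti : Antitone fun n => ‖x n - z‖ :=
    antitone_norm_sub_of_nonexpansive (fun n => (hT _ (hg n)).1) (fun n => hz _ (hg n)) hx
  have hsplit : ∀ n, x n - x (n + 1) =
      ∑ i ∈ hI.toFinset, {n | g n = i}.indicator (fun n => x n - x (n + 1)) n := fun n => by
    rw [Finset.sum_eq_single_of_mem (g n) (hI.mem_toFinset.2 (hg n))]
    · simp
    · intro i _ hi
      exact Set.indicator_of_notMem (s := {n | g n = i}) (Ne.symm hi) _
  refine (tendsto_congr hsplit).2 ?_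
  simpa only [Finset.sum_const_zero] using tendsto_finsetSum hI.toFinset fun i hi =>
    (hT i (hI.mem_toFinset.1 hi)).tendsto_indicator_sub_succ (hz i (hI.mem_toFinset.1 hi)) hanti
      (A := {n | g n = i}) fun n hn => (hn : g n = i) ▸ hx n

end NormedAddCommGroup

section InnerProductSpace

variable {E : Type*} [NormedAddCommGroup E] [InnerProductSpace ℝ E]

theorem WeakConvergesTo.congr_tendsto_sub {u v : ℕ → E} {p : E} (hu : WeakConvergesTo u p)
    (huv : Tendsto (fun n => v n - u n) atTop (𝓝 0)) : WeakConvergesTo v p := fun y => by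
  have := (hu y).add ((huv.inner (tendsto_const_nhds (x := y))).trans (by rw [inner_zero_left]))
  simpa [← inner_add_left] using this

theorem eq_of_weakConvergesTo_of_tendsto_norm_sub_s6 {x : ℕ → E} {p q : E} {φ ψ : ℕ → ℕ}
    (hφ : Tendsto φ atTop atTop) (hψ : Tendsto ψ atTop atTop)
    (hp : WeakConvergesTo (x ∘ φ) p) (hq : WeakConvergesTo (x ∘ ψ) q)
    (hp_dist : ∃ a, Tendsto (fun n => ‖x n - p‖) atTop (𝓝 a))
    (hq_dist : ∃ b, Tendsto (fun n => ‖x n - q‖) atTop (𝓝 b)) : p = q := by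
  obtain ⟨a, ha⟩ := hp_dist
  obtain ⟨b, hb⟩ := hq_dist
  have hid : ∀ n, ⟪x n, q - p⟫ = (‖x n - p‖ ^ 2 - ‖x n - q‖ ^ 2 - ‖p‖ ^ 2 + ‖q‖ ^ 2) / 2 := by
    intro n
    rw [norm_sub_sq_real, norm_sub_sq_real, inner_sub_right]
    ring
  have hlim : Tendsto (fun n => ⟪x n, q - p⟫) atTop
      (𝓝 ((a ^ 2 - b ^ 2 - ‖p‖ ^ 2 + ‖q‖ ^ 2) / 2)) := by
    simp only [hid]
    exact ((((ha.pow 2).sub (hb.pow 2)).sub_const _).add_const _).div_const 2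
  have hpq : ⟪p, q - p⟫ = ⟪q, q - p⟫ :=
    tendsto_nhds_unique (hp (q - p)) (hlim.comp hφ) |>.trans
      (tendsto_nhds_unique (hq (q - p)) (hlim.comp hψ)).symm
  have : ‖q - p‖ ^ 2 = 0 := by
    rw [← real_inner_self_eq_norm_sq, inner_sub_left, hpq, sub_self]
  exact (sub_eq_zero.1 (norm_eq_zero.1 (pow_eq_zero_iff two_ne_zero |>.1 this))).symm

end InnerProductSpace

theorem WeakConvergesTo.exists_norm_le {u : ℕ → H} {p : H} (hu : WeakConvergesTo u p) :
    ∃ C, ∀ n, ‖u n‖ ≤ C := by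
  obtain ⟨C, hC⟩ := banach_steinhaus (g := fun n => innerSL ℝ (u n)) fun y => by
    obtain ⟨C, hC⟩ := (hu y).norm.bddAbove_range
    exact ⟨C, fun n => by simpa using hC ⟨n, rfl⟩⟩
  exact ⟨C, fun n => by simpa using hC n⟩

theorem exists_strictMono_weakConvergesTo_s6 {b : ℕ → H} {C : ℝ} (hb : ∀ n, ‖b n‖ ≤ C) :
    ∃ φ : ℕ → ℕ, StrictMono φ ∧ ∃ p, WeakConvergesTo (b ∘ φ) p := by
  set K := (Submodule.span ℝ (Set.range b)).topologicalClosure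
  have : TopologicalSpace.SeparableSpace K :=
    ((Set.countable_range b).isSeparable.span (R := ℝ)).closure.separableSpace
  have hbK : ∀ n, b n ∈ K := fun n =>
    Submodule.le_topologicalClosure _ (Submodule.subset_span ⟨n, rfl⟩)
  let f : ℕ → WeakDual ℝ K := fun n => (innerSL ℝ (b n)).comp K.subtypeL
  obtain ⟨G, -, φ, hφ, hG⟩ := WeakDual.isSeqCompact_closedBall ℝ K 0 C (x := f) fun n => by
    suffices ‖WeakDual.toStrongDual (f n)‖ ≤ C by simpa using this
    refine ContinuousLinearMap.opNorm_le_bound _ ((norm_nonneg _).trans (hb 0)) fun v => ?_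
    calc ‖⟪b n, (v : H)⟫‖ ≤ ‖b n‖ * ‖v‖ := norm_inner_le_norm _ _
      _ ≤ C * ‖v‖ := by gcongr; exact hb n
  refine ⟨φ, hφ, (InnerProductSpace.toDual ℝ K).symm (WeakDual.toStrongDual G), fun y => ?_⟩
  have hb_inner : ∀ n, ⟪b n, y⟫ = f n (K.orthogonalProjectionOnto y) := fun n =>
    (K.inner_orthogonalProjectionOnto_eq_of_mem_left ⟨b n, hbK n⟩ y).symm
  have hp_inner : ⟪((InnerProductSpace.toDual ℝ K).symm (WeakDual.toStrongDual G) : H), y⟫ =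
      G (K.orthogonalProjectionOnto y) := by
    rw [← K.inner_orthogonalProjectionOnto_eq_of_mem_left, InnerProductSpace.toDual_symm_apply]
    rfl
  simp only [Function.comp_apply, hb_inner, hp_inner]
  exact ((WeakDual.eval_continuous (K.orthogonalProjectionOnto y)).tendsto G).comp hG

theorem Nonexpansive.apply_eq_of_weakConvergesTo_s6 {T : H → H} (hT : Nonexpansive T)
    {u : ℕ → H} {p : H} (hu : WeakConvergesTo u p)
    (hdisp : Tendsto (fun k => u k - T (u k)) atTop (𝓝 0)) : T p = p := by
  obtain ⟨C, hC⟩ := hu.exists_norm_le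
  set ε := fun k => ‖u k - T (u k)‖
  have hε : Tendsto ε atTop (𝓝 0) := by simpa using hdisp.norm
  have hbound : ∀ k, ‖p - T p‖ ^ 2 ≤ ε k * (ε k + 2 * (C + ‖p‖)) - 2 * ⟪u k - p, p - T p⟫ := by
    intro k
    have htri : ‖u k - T p‖ ≤ ε k + ‖u k - p‖ :=
      (norm_sub_le_norm_sub_add_norm_sub _ (T (u k)) _).trans (add_le_add le_rfl (hT _ _))
    have hexp : ‖u k - T p‖ ^ 2 = ‖u k - p‖ ^ 2 + 2 * ⟪u k - p, p - T p⟫ + ‖p - T p‖ ^ 2 := by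
      rw [← norm_add_sq_real, sub_add_sub_cancel]
    have hup : ‖u k - p‖ ≤ C + ‖p‖ := (norm_sub_le _ _).trans (by linarith [hC k])
    nlinarith [norm_nonneg (u k - T p), norm_nonneg (u k - T (u k))]
  have hinner : Tendsto (fun k => ⟪u k - p, p - T p⟫) atTop (𝓝 0) := by
    simpa [inner_sub_left] using (hu (p - T p)).sub_const ⟪p, p - T p⟫
  have hlim : Tendsto (fun k => ε k * (ε k + 2 * (C + ‖p‖)) - 2 * ⟪u k - p, p - T p⟫)
      atTop (𝓝 0) := by
    simpa using (hε.mul (hε.add_const _)).sub (hinner.const_mul 2)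
  have hsq : ‖p - T p‖ ^ 2 ≤ 0 := ge_of_tendsto hlim (Eventually.of_forall hbound)
  exact (sub_eq_zero.1 (norm_eq_zero.1 (by nlinarith [norm_nonneg (p - T p)]))).symm

theorem Nonexpansive.apply_eq_of_weakConvergesTo_of_frequently {T : H → H} (hT : Nonexpansive T)
    {x : ℕ → H} (hreg : Tendsto (fun n => x n - x (n + 1)) atTop (𝓝 0)) {M : ℕ}
    (hvisit : ∀ n, ∃ j ∈ Set.Ico n (n + M), x (j + 1) = T (x j))
    {φ : ℕ → ℕ} (hφ : Tendsto φ atTop atTop) {p : H} (hp : WeakConvergesTo (x ∘ φ) p) :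
    T p = p := by
  choose j hjmem hj using fun k => hvisit (φ k)
  have hjtop : Tendsto j atTop atTop := tendsto_atTop_mono (fun k => (hjmem k).1) hφ
  refine hT.apply_eq_of_weakConvergesTo_s6
    (hp.congr_tendsto_sub (tendsto_sub_of_tendsto_sub_succ hreg hφ hjmem)) ?_
  simpa [Function.comp_def, hj] using hreg.comp hjtop

theorem FejerMonotone.exists_weakConvergesTo {x : ℕ → H} {F : Set H} (hx : FejerMonotone x F)
    (hF : F.Nonempty)
    (hclus : ∀ φ : ℕ → ℕ, Tendsto φ atTop atTop → ∀ p, WeakConvergesTo (x ∘ φ) p → p ∈ F) :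
    ∃ p ∈ F, WeakConvergesTo x p := by
  obtain ⟨z, hz⟩ := hF
  have hbound : ∀ n, ‖x n‖ ≤ ‖x 0 - z‖ + ‖z‖ := fun n =>
    (norm_le_norm_sub_add (x n) z).trans (by linarith [hx z hz (Nat.zero_le n)])
  obtain ⟨φ, hφ, p, hp⟩ := exists_strictMono_weakConvergesTo_s6 hbound
  have hpF := hclus φ hφ.tendsto_atTop p hp
  refine ⟨p, hpF, fun y => tendsto_of_subseq_tendsto fun ns hns => ?_⟩
  obtain ⟨ψ, hψ, q, hq⟩ := exists_strictMono_weakConvergesTo_s6 fun n => hbound (ns n)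
  have hnsψ : Tendsto (ns ∘ ψ) atTop atTop := hns.comp hψ.tendsto_atTop
  have hqF := hclus _ hnsψ q hq
  have hqp : q = p := eq_of_weakConvergesTo_of_tendsto_norm_sub_s6 hnsψ hφ.tendsto_atTop hq hp
    ((hx q hqF).exists_tendsto_of_nonneg fun _ => norm_nonneg _)
    ((hx p hpF).exists_tendsto_of_nonneg fun _ => norm_nonneg _)
  exact ⟨ψ, hqp ▸ hq y⟩

theorem stmt6_general
    (m M : ℕ)
    (T : ℕ → H → H) (hT : ∀ i ∈ Set.Icc 1 m, StronglyNonexpansive (T i))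
    (hfix : ∃ z : H, ∀ i ∈ Set.Icc 1 m, T i z = z)
    (h : ℕ → ℕ) (hh : Set.range h = Set.Icc 1 m)
    (hqp : ∀ n : ℕ, h '' Set.Ico n (n + M) = Set.range h)
    (x : H) :
    ∃ p, (∀ i ∈ Set.Icc 1 m, T i p = p) ∧
      WeakConvergesTo (fun n => compSeq (n + 1) (fun i => T (h i)) x) p := by
  set y := fun n => compSeq (n + 1) (fun i => T (h i)) x
  have hstep : ∀ n, y (n + 1) = T (h (n + 1)) (y n) := fun n => rfl
  have hh_mem : ∀ n, h n ∈ Set.Icc 1 m := fun n => hh ▸ Set.mem_range_self n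
  obtain ⟨z, hz⟩ := hfix
  have hreg := tendsto_sub_succ_of_stronglyNonexpansive_s6 (Set.finite_Icc 1 m) hT hz
    (fun n => hh_mem (n + 1)) hstep
  have hfejer : FejerMonotone y {p | ∀ i ∈ Set.Icc 1 m, T i p = p} := fun q hq =>
    antitone_norm_sub_of_nonexpansive (fun n => (hT _ (hh_mem (n + 1))).1)
      (fun n => hq _ (hh_mem (n + 1))) hstep
  refine hfejer.exists_weakConvergesTo ⟨z, hz⟩ fun φ hφ p hp i hi => ?_
  refine (hT i hi).1.apply_eq_of_weakConvergesTo_of_frequently hreg (M := M) (fun n => ?_) hφ hp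
  obtain ⟨j, ⟨hj_lo, hj_hi⟩, hj⟩ : i ∈ h '' Set.Ico (n + 1) (n + 1 + M) := by
    rw [hqp, hh]; exact hi
  obtain ⟨k, rfl⟩ : ∃ k, j = k + 1 := ⟨j - 1, by omega⟩
  exact ⟨k, ⟨by omega, by omega⟩, by rw [hstep, hj]⟩

/-- Theorem 2.14: the unrestricted product of finitely many strongly nonexpansive
operators determined by an M-quasi-periodic mapping converges weakly to a common fixed point. -/
theorem stmt6
    (m M : ℕ) (hM : 0 < M)
    (T : ℕ → H → H) (hT : ∀ i ∈ Set.Icc 1 m, StronglyNonexpansive (T i))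
    (hfix : ∃ z : H, ∀ i ∈ Set.Icc 1 m, T i z = z)
    (h : ℕ → ℕ) (hh : Set.range h = Set.Icc 1 m)
    (hqp : ∀ n : ℕ, h '' Set.Ico n (n + M) = Set.range h)
    (x : H) :
    ∃ p, (∀ i ∈ Set.Icc 1 m, T i p = p) ∧
      WeakConvergesTo (fun n => compSeq (n + 1) (fun i => T (h i)) x) p :=
  stmt6_general m M T hT hfix h hh hqp x
end

section
/- Let {T_i}_{i=1}^m be a finite family of operators on a set, let M be a positive integer and let h : ℕ → {1,…,m} be an M-quasi-periodic surjection. Then for every strictly increasing sequence (n_k)_{k=0}^∞ of natural numbers with n_k ≥ n_{k−1} + M for every positive integer k, there exist a strictly increasing sequence (n'_k)_{k=0}^∞ of natural numbers and a finite sequence (l_i)_{i=1}^M whose set of values is {1,…,m}, such that h(j) = l_{j − n_{n'_k}} for every k ∈ ℕ and every j ∈ {n_{n'_k}+1,…,n_{n'_k}+M}. Consequently, P_{n_{n'_{k+1}}} = T_{h(n_{n'_{k+1}})}∘⋯∘T_{h(n_{n'_k}+M+1)}∘T_{l_M}∘⋯∘T_{l_1}∘P_{n_{n'_k}}, where P_n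 := T_{h(n)}∘⋯∘T_{h(0)} is the unrestricted product of {T_i}_{i=1}^m determined by h. -/
open Filter Topology RealInnerProductSpace

variable {H : Type*} [NormedAddCommGroup H] [InnerProductSpace ℝ H] [CompleteSpace H]

lemma compSeq_add {α : Type*} (a b : ℕ) (g : ℕ → α → α) :
    compSeq (a + b) g = compSeq b (fun i => g (a + i)) ∘ compSeq a g := by
  induction b with
  | zero => rfl
  | succ b ih =>
    show g (a + b) ∘ compSeq (a + b) g = _
    rw [ih]; rfl

lemma compSeq_congr {α : Type*} (k : ℕ) (g g' : ℕ → α → α)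
    (hg : ∀ i < k, g i = g' i) : compSeq k g = compSeq k g' := by
  induction k with
  | zero => rfl
  | succ k ih =>
    show g k ∘ compSeq k g = g' k ∘ compSeq k g'
    rw [ih fun i hi => hg i (hi.trans (Nat.lt_succ_self k)), hg k (Nat.lt_succ_self k)]

/-- Lemma 4.3: extraction of a subsequence along which the mapping `h` repeats
the same pattern of length `M`, and the resulting factorization of the unrestricted product. -/
theorem stmt9 {α : Type*}
    (m M : ℕ) (hM : 0 < M)
    (T : ℕ → α → α)
    (h : ℕ → ℕ) (hh : Set.range h = Set.Icc 1 m)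
    (hqp : ∀ n : ℕ, h '' Set.Ico n (n + M) = Set.range h)
    (n : ℕ → ℕ) (hmono : StrictMono n) (hgap : ∀ k : ℕ, n k + M ≤ n (k + 1)) :
    ∃ n' : ℕ → ℕ, StrictMono n' ∧ ∃ l : ℕ → ℕ,
      l '' Set.Icc 1 M = Set.Icc 1 m ∧
      (∀ k : ℕ, ∀ j ∈ Set.Icc (n (n' k) + 1) (n (n' k) + M), h j = l (j - n (n' k))) ∧
      (∀ k : ℕ,
        compSeq (n (n' (k + 1)) + 1) (fun i => T (h i)) =
          (compSeq (n (n' (k + 1)) - (n (n' k) + M))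
              (fun i => T (h (n (n' k) + M + 1 + i)))) ∘
            (compSeq M fun i => T (l (i + 1))) ∘
              compSeq (n (n' k) + 1) (fun i => T (h i))) := by

  have hle : ∀ j, h j ≤ m := fun j => (hh ▸ Set.mem_range_self j : h j ∈ Set.Icc 1 m).2
  set F : ℕ → (Fin M → Fin (m + 1)) :=
    fun k i => ⟨h (n k + 1 + i), Nat.lt_succ_of_le (hle _)⟩ with hF
  obtain ⟨b, hb⟩ := Finite.exists_infinite_fiber F
  set p : ℕ → Prop := fun k => F k = b with hp
  have hinfp : (setOf p).Infinite := by
    rw [← Set.infinite_coe_iff]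
    exact hb
  set n' : ℕ → ℕ := Nat.nth p with hn'
  have hmem : ∀ k, p (n' k) := fun k => Nat.nth_mem_of_infinite hinfp k
  have key : ∀ k, ∀ i < M, h (n (n' k) + 1 + i) = h (n (n' 0) + 1 + i) := by
    intro k i hi
    have h1 := congrFun (hmem k) ⟨i, hi⟩
    have h2 := congrFun (hmem 0) ⟨i, hi⟩
    have := h1.trans h2.symm
    simpa [hF, Fin.ext_iff] using this
  have hge : ∀ k, n (n' k) + M ≤ n (n' (k + 1)) := by
    intro k
    calc n (n' k) + M ≤ n (n' k + 1) := hgap _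
      _ ≤ n (n' (k + 1)) := hmono.monotone (Nat.nth_strictMono hinfp (Nat.lt_succ_self k))
  refine ⟨n', Nat.nth_strictMono hinfp, fun j => h (n (n' 0) + j), ?_, ?_, ?_⟩
  · rw [← hh, ← hqp (n (n' 0) + 1)]
    ext x
    simp only [Set.mem_image, Set.mem_Icc, Set.mem_Ico]
    constructor
    · rintro ⟨j, ⟨h1, h2⟩, rfl⟩
      exact ⟨n (n' 0) + j, by omega, rfl⟩
    · rintro ⟨j, ⟨h1, h2⟩, rfl⟩
      exact ⟨j - n (n' 0), by omega, by congr 1; omega⟩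
  · intro k j hj
    simp only [Set.mem_Icc] at hj
    have hji : j = n (n' k) + 1 + (j - (n (n' k) + 1)) := by omega
    rw [hji, key k _ (by omega)]
    congr 1
    omega
  · intro k
    have hd : n (n' (k + 1)) + 1 =
        (n (n' k) + 1) + M + (n (n' (k + 1)) - (n (n' k) + M)) := by
      have := hge k; omega
    have e1 : (compSeq (n (n' (k + 1)) - (n (n' k) + M))
          fun i => T (h (n (n' k) + 1 + M + i))) =
        compSeq (n (n' (k + 1)) - (n (n' k) + M))
          fun i => T (h (n (n' k) + M + 1 + i)) :=
      compSeq_congr _ _ _ fun i _ =>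
        congrArg T (congrArg h (show n (n' k) + 1 + M + i = n (n' k) + M + 1 + i by omega))
    have e2 : (compSeq M fun i => T (h (n (n' k) + 1 + i))) =
        compSeq M fun i => T (h (n (n' 0) + (i + 1))) :=
      compSeq_congr _ _ _ fun i hi =>
        congrArg T ((key k i hi).trans
          (congrArg h (show n (n' 0) + 1 + i = n (n' 0) + (i + 1) by omega)))
    rw [hd, compSeq_add ((n (n' k) + 1) + M), compSeq_add (n (n' k) + 1) M, e1, e2]
end
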